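/- Let ψ ∈ 𝒦* with apex τ and extinction probability function q. For all t ∈ (0,R_ψ) with t ≠ τ, q is differentiable at t and q'(t) = (q(t)/t)·((1 - m_ψ(t))/(1 - m_ψ(t·q(t))) - 1), where m_ψ(s) = sψ'(s)/ψ(s). In particular q'(t) < 0 for t ∈ (τ,R_ψ). -/

import Mathlib

open Set Filter Topology

/-- The function defined by the power series with coefficients `b`. -/
noncomputable def psi (b : ℕ → ℝ) (t : ℝ) : ℝ := ∑' n, b n * t ^ n

/-- The mean function of the Khinchin family of `psi b`. -/
noncomputable def mean (b : ℕ → ℝ) (t : ℝ) : ℝ := t * deriv (psi b) t / psi b t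

/-- Extinction probability of the Galton–Watson process with offspring
distribution `Y_t`: the smallest nonnegative fixed point of the offspring
probability generating function `ψ_t(x) = ψ(tx)/ψ(t)`. -/
noncomputable def extq (b : ℕ → ℝ) (t : ℝ) : ℝ :=
  sInf {x : ℝ | 0 ≤ x ∧ psi b (t * x) = x * psi b t}

/-!
Write `h(t) = ψ(t)/t` for the slope of the chord from the origin to the graph of `ψ`. For
`t, x > 0`, `ψ(tx) = x ψ(t)` iff `h(tx) = h(t)`, so `q(t) = s/t` for the least `s > 0` with
`h(s) = h(t)`. Now `h' = -(ψ - tψ')/t²`, and the tangent intercept `ψ(t) - tψ'(t) = Σ (1 - n) bₙ tⁿ`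
is strictly decreasing and vanishes at the apex `τ`; so `h` decreases on `(0, τ]` and increases
on `[τ, R)`. Hence `q ≡ 1` on `(0, τ]`, while for `t > τ` the point `s(t) = t q(t)` is the unique
solution in `(0, τ)` of `h(s) = h(t)`. Strict monotonicity of `h` there makes `s` continuous,
and differentiating `h(s(t)) = h(t)` gives `s' = h'(t)/h'(s)`, which becomes the stated formula
through `1 - m_ψ = (ψ - tψ')/ψ` and `ψ(s) = q(t) ψ(t)`.
-/

theorem StrictAntiOn.continuousAt_of_comp {X α β : Type*} [TopologicalSpace X]
    [LinearOrder α] [TopologicalSpace α] [OrderTopology α] [DenselyOrdered α]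
    [LinearOrder β] [TopologicalSpace β] [OrderTopology β]
    {f : α → β} {g : X → α} {a c : α} {x : X} (hf : StrictAntiOn f (Ioo a c))
    (hgx : g x ∈ Ioo a c) (hg : ∀ᶠ y in 𝓝 x, g y ∈ Ioo a c) (hfg : ContinuousAt (f ∘ g) x) :
    ContinuousAt g x := by
  refine tendsto_order.2 ⟨fun l hl => ?_, fun u hu => ?_⟩
  · obtain ⟨l', hl', hl'x⟩ := exists_between (max_lt hl hgx.1)
    have hl'mem : l' ∈ Ioo a c := ⟨(le_max_right _ _).trans_lt hl', hl'x.trans hgx.2⟩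
    filter_upwards [hg, (tendsto_order.1 hfg).2 _ (hf hl'mem hgx hl'x)] with y hy hfy
    exact (le_max_left _ _).trans_lt hl' |>.trans ((hf.lt_iff_gt hy hl'mem).1 hfy)
  · obtain ⟨u', hxu', hu'⟩ := exists_between (lt_min hu hgx.2)
    have hu'mem : u' ∈ Ioo a c := ⟨hgx.1.trans hxu', hu'.trans_le (min_le_right _ _)⟩
    filter_upwards [hg, (tendsto_order.1 hfg).1 _ (hf hgx hu'mem hxu')] with y hy hfy
    exact ((hf.lt_iff_gt hu'mem hy).1 hfy).trans (hu'.trans_le (min_le_left _ _))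

section PowerSeries

variable {b : ℕ → ℝ} {R : ℝ}

theorem summable_natCast_mul_of_lt {x y : ℝ} (hx : 0 ≤ x) (hxy : x < y)
    (hs : Summable fun n => b n * y ^ n) : Summable fun n : ℕ => (n : ℝ) * (b n * x ^ n) := by
  have hy : 0 < y := hx.trans_lt hxy
  have hlim : Tendsto (fun n : ℕ => (n : ℝ) * (x / y) ^ n) cofinite (𝓝 0) := by
    rw [Nat.cofinite_eq_atTop]
    exact tendsto_self_mul_const_pow_of_lt_one (div_nonneg hx hy.le) ((div_lt_one hy).2 hxy)
  refine (Summable.mul_tendsto_const (f := fun n => b n * y ^ n) hs.abs hlim).congr fun n => ?_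
  rw [div_pow]
  field_simp

theorem hasDerivAt_psi (hnn : ∀ n, 0 ≤ b n)
    (hconv : ∀ t : ℝ, 0 ≤ t → t < R → Summable fun n => b n * t ^ n)
    {t : ℝ} (ht : 0 ≤ t) (htR : t < R) :
    HasDerivAt (psi b) (∑' n : ℕ, n * b n * t ^ (n - 1)) t := by
  obtain ⟨r, htr, hrR⟩ := exists_between htR
  obtain ⟨y, hry, hyR⟩ := exists_between hrR
  have hr : 0 < r := ht.trans_lt htr
  have hsum : Summable fun n : ℕ => n * b n * r ^ (n - 1) := by
    refine ((summable_natCast_mul_of_lt hr.le hry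
      (hconv y (hr.le.trans hry.le) hyR)).div_const r).congr fun n => ?_
    rcases n with _ | n
    · simp
    · simp only [Nat.add_sub_cancel, pow_succ]
      field_simp
  refine hasDerivAt_tsum_of_isPreconnected (g := fun n z => b n * z ^ n)
    (g' := fun n z => n * b n * z ^ (n - 1)) (t := Ioo (-r) r) hsum isOpen_Ioo isPreconnected_Ioo
    (fun n z _ => by simpa [mul_left_comm, mul_assoc] using (hasDerivAt_pow n z).const_mul (b n))
    (fun n z hz => ?_) (y₀ := t) ⟨by linarith, htr⟩ (hconv t ht htR) ⟨by linarith, htr⟩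
  rw [Real.norm_eq_abs, abs_mul, abs_of_nonneg (mul_nonneg n.cast_nonneg (hnn n)), abs_pow]
  have := hnn n
  gcongr
  exact abs_le.2 ⟨hz.1.le, hz.2.le⟩

theorem psi_zero : psi b 0 = b 0 := by
  rw [psi, tsum_eq_single 0 fun n hn => by simp [zero_pow hn]]
  simp

theorem coeff_zero_le_psi (hnn : ∀ n, 0 ≤ b n)
    (hconv : ∀ t : ℝ, 0 ≤ t → t < R → Summable fun n => b n * t ^ n)
    {t : ℝ} (ht : 0 ≤ t) (htR : t < R) : b 0 ≤ psi b t := by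
  rw [psi]
  simpa using (hconv t ht htR).le_tsum 0 fun n _ => mul_nonneg (hnn n) (pow_nonneg ht n)

noncomputable def tangentIntercept (b : ℕ → ℝ) (t : ℝ) : ℝ := psi b t - t * deriv (psi b) t

noncomputable def chordSlope (b : ℕ → ℝ) (t : ℝ) : ℝ := psi b t / t

theorem hasSum_tangentIntercept (hnn : ∀ n, 0 ≤ b n)
    (hconv : ∀ t : ℝ, 0 ≤ t → t < R → Summable fun n => b n * t ^ n)
    {t : ℝ} (ht : 0 ≤ t) (htR : t < R) :
    HasSum (fun n : ℕ => (1 - n) * (b n * t ^ n)) (tangentIntercept b t) := by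
  obtain ⟨y, hty, hyR⟩ := exists_between htR
  have hweighted := summable_natCast_mul_of_lt ht hty (hconv y (ht.trans hty.le) hyR)
  have hderiv : t * deriv (psi b) t = ∑' n : ℕ, n * (b n * t ^ n) := by
    rw [(hasDerivAt_psi hnn hconv ht htR).deriv, ← tsum_mul_left]
    refine tsum_congr fun n => ?_
    rcases n with _ | n
    · simp
    · simp only [Nat.add_sub_cancel, pow_succ]
      ring
  have hsub := (hconv t ht htR).hasSum.sub hweighted.hasSum
  rw [tangentIntercept, hderiv, psi]
  have hterm : (fun n : ℕ => b n * t ^ n - n * (b n * t ^ n)) = fun n => (1 - n) * (b n * t ^ n) :=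
    funext fun n => by ring
  exact hterm ▸ hsub

theorem tangentIntercept_strictAntiOn (hnn : ∀ n, 0 ≤ b n)
    (hconv : ∀ t : ℝ, 0 ≤ t → t < R → Summable fun n => b n * t ^ n)
    {m : ℕ} (hm : 2 ≤ m) (hbm : 0 < b m) : StrictAntiOn (tangentIntercept b) (Ico 0 R) := by
  intro x hx y hy hxy
  refine hasSum_lt (f := fun n : ℕ => (1 - n) * (b n * y ^ n)) (i := m) (fun n => ?_) ?_
    (hasSum_tangentIntercept hnn hconv hy.1 hy.2) (hasSum_tangentIntercept hnn hconv hx.1 hx.2)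
  · rcases n with _ | n
    · simp
    · have := hnn (n + 1)
      refine mul_le_mul_of_nonpos_left ?_ (by push_cast; linarith)
      gcongr
      exact hx.1
  · have hm' : (1 : ℝ) - m < 0 := by
      have : (2 : ℝ) ≤ m := by exact_mod_cast hm
      linarith
    refine mul_lt_mul_of_neg_left ?_ hm'
    gcongr
    exact hx.1

theorem one_sub_mean {t : ℝ} (hψ : psi b t ≠ 0) :
    1 - mean b t = tangentIntercept b t / psi b t := by
  rw [mean, tangentIntercept]
  field_simp

theorem hasDerivAt_chordSlope (hnn : ∀ n, 0 ≤ b n)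
    (hconv : ∀ t : ℝ, 0 ≤ t → t < R → Summable fun n => b n * t ^ n)
    {t : ℝ} (ht : 0 < t) (htR : t < R) :
    HasDerivAt (chordSlope b) (-tangentIntercept b t / t ^ 2) t := by
  have hψ := hasDerivAt_psi hnn hconv ht.le htR
  rw [tangentIntercept, hψ.deriv]
  exact (hψ.div (hasDerivAt_id' t) ht.ne').congr_deriv (by ring)

theorem chordSlope_mul_eq_iff {t x : ℝ} (ht : t ≠ 0) (hx : x ≠ 0) :
    chordSlope b (t * x) = chordSlope b t ↔ psi b (t * x) = x * psi b t := by
  rw [chordSlope, chordSlope, div_eq_div_iff (mul_ne_zero ht hx) ht]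
  constructor <;> intro h
  · exact mul_right_cancel₀ ht (by linear_combination h)
  · linear_combination t * h

theorem extq_eq_div_of_injOn (hb0 : b 0 ≠ 0) {s t : ℝ} (hs : 0 < s) (ht : 0 < t)
    (hinj : InjOn (chordSlope b) (Ioc 0 s)) (hst : chordSlope b s = chordSlope b t) :
    extq b t = s / t := by
  have hts : t * (s / t) = s := by field_simp
  refine IsLeast.csInf_eq ⟨⟨by positivity, ?_⟩, fun x ⟨hx, hxψ⟩ => ?_⟩
  · rw [← chordSlope_mul_eq_iff ht.ne' (by positivity), hts, hst]
  · have hx0 : x ≠ 0 := by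
      rintro rfl
      simp [psi_zero, hb0] at hxψ
    by_contra! hlt
    have htx : t * x < s := by rwa [lt_div_iff₀ ht, mul_comm] at hlt
    have htx0 : 0 < t * x := mul_pos ht (hx.lt_of_ne' hx0)
    have := hinj ⟨htx0, htx.le⟩ ⟨hs, le_rfl⟩
      (((chordSlope_mul_eq_iff ht.ne' hx0).2 hxψ).trans hst.symm)
    exact htx.ne this

end PowerSeries

structure IsApex (b : ℕ → ℝ) (R τ : ℝ) : Prop where
  nonneg : ∀ n, 0 ≤ b n
  coeff_zero_pos : 0 < b 0
  summable : ∀ t : ℝ, 0 ≤ t → t < R → Summable fun n => b n * t ^ n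
  mem_Ioo : τ ∈ Ioo 0 R
  mean_eq_one : mean b τ = 1

namespace IsApex

variable {b : ℕ → ℝ} {R τ t : ℝ}

theorem psi_pos (h : IsApex b R τ) (ht : 0 ≤ t) (htR : t < R) : 0 < psi b t :=
  h.coeff_zero_pos.trans_le (coeff_zero_le_psi h.nonneg h.summable ht htR)

theorem tangentIntercept_apex (h : IsApex b R τ) : tangentIntercept b τ = 0 := by
  have hψ := h.psi_pos h.mem_Ioo.1.le h.mem_Ioo.2
  have := one_sub_mean hψ.ne'
  rwa [h.mean_eq_one, sub_self, eq_comm, div_eq_zero_iff, or_iff_left hψ.ne'] at this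

theorem exists_two_le_coeff_pos (h : IsApex b R τ) : ∃ m, 2 ≤ m ∧ 0 < b m := by
  by_contra! hsmall
  have hsum := hasSum_tangentIntercept h.nonneg h.summable h.mem_Ioo.1.le h.mem_Ioo.2
  have hb0 : HasSum (fun n : ℕ => (1 - n) * (b n * τ ^ n)) (b 0) := by
    convert hasSum_single (f := fun n : ℕ => (1 - n) * (b n * τ ^ n)) 0 fun n hn => ?_ using 1
    · simp
    rcases n with _ | _ | n
    · exact absurd rfl hn
    · simp
    · simp [le_antisymm (hsmall (n + 2) (by omega)) (h.nonneg _)]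
  exact h.coeff_zero_pos.ne' (hb0.unique (h.tangentIntercept_apex ▸ hsum))

theorem tangentIntercept_strictAntiOn (h : IsApex b R τ) :
    StrictAntiOn (tangentIntercept b) (Ico 0 R) :=
  let ⟨_, hm, hbm⟩ := h.exists_two_le_coeff_pos
  _root_.tangentIntercept_strictAntiOn h.nonneg h.summable hm hbm

theorem tangentIntercept_pos (h : IsApex b R τ) (ht : t ∈ Ico 0 τ) : 0 < tangentIntercept b t :=
  h.tangentIntercept_apex ▸ h.tangentIntercept_strictAntiOn ⟨ht.1, ht.2.trans h.mem_Ioo.2⟩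
    ⟨h.mem_Ioo.1.le, h.mem_Ioo.2⟩ ht.2

theorem tangentIntercept_neg (h : IsApex b R τ) (ht : t ∈ Ioo τ R) : tangentIntercept b t < 0 :=
  h.tangentIntercept_apex ▸ h.tangentIntercept_strictAntiOn ⟨h.mem_Ioo.1.le, h.mem_Ioo.2⟩
    ⟨h.mem_Ioo.1.le.trans ht.1.le, ht.2⟩ ht.1

theorem hasDerivAt_chordSlope (h : IsApex b R τ) (ht : 0 < t) (htR : t < R) :
    HasDerivAt (chordSlope b) (-tangentIntercept b t / t ^ 2) t :=
  _root_.hasDerivAt_chordSlope h.nonneg h.summable ht htR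

theorem chordSlope_strictAntiOn (h : IsApex b R τ) : StrictAntiOn (chordSlope b) (Ioc 0 τ) := by
  refine strictAntiOn_of_deriv_neg (convex_Ioc 0 τ) (fun t ht => ?_) fun t ht => ?_
  · exact (h.hasDerivAt_chordSlope ht.1 (ht.2.trans_lt h.mem_Ioo.2)).continuousAt
      |>.continuousWithinAt
  · rw [interior_Ioc] at ht
    rw [(h.hasDerivAt_chordSlope ht.1 (ht.2.trans h.mem_Ioo.2)).deriv]
    have := h.tangentIntercept_pos ⟨ht.1.le, ht.2⟩
    exact div_neg_of_neg_of_pos (by linarith) (pow_pos ht.1 2)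

theorem chordSlope_strictMonoOn (h : IsApex b R τ) : StrictMonoOn (chordSlope b) (Ico τ R) := by
  have hτ := h.mem_Ioo.1
  refine strictMonoOn_of_deriv_pos (convex_Ico τ R) (fun t ht => ?_) fun t ht => ?_
  · exact (h.hasDerivAt_chordSlope (hτ.trans_le ht.1) ht.2).continuousAt.continuousWithinAt
  · rw [interior_Ico] at ht
    rw [(h.hasDerivAt_chordSlope (hτ.trans ht.1) ht.2).deriv]
    have := h.tangentIntercept_neg ht
    exact div_pos (by linarith) (pow_pos (hτ.trans ht.1) 2)

theorem extq_eq_one (h : IsApex b R τ) (ht : t ∈ Ioc 0 τ) : extq b t = 1 := by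
  rw [extq_eq_div_of_injOn h.coeff_zero_pos.ne' ht.1 ht.1
    (h.chordSlope_strictAntiOn.injOn.mono (Ioc_subset_Ioc_right ht.2)) rfl, div_self ht.1.ne']

theorem exists_chordSlope_eq (h : IsApex b R τ) (ht : t ∈ Ioo τ R) :
    ∃ s ∈ Ioo 0 τ, chordSlope b s = chordSlope b t := by
  obtain ⟨hτ0, hτR⟩ := h.mem_Ioo
  have ht0 : 0 < t := hτ0.trans ht.1
  have hc : 0 < chordSlope b t := div_pos (h.psi_pos ht0.le ht.2) ht0
  set s₁ := min τ (b 0 / chordSlope b t)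
  have hs₁ : 0 < s₁ := lt_min hτ0 (div_pos h.coeff_zero_pos hc)
  have hs₁τ : s₁ ≤ τ := min_le_left _ _
  have hlow : chordSlope b τ < chordSlope b t :=
    h.chordSlope_strictMonoOn ⟨le_rfl, hτR⟩ ⟨ht.1.le, ht.2⟩ ht.1
  have hhigh : chordSlope b t ≤ chordSlope b s₁ := by
    rw [show chordSlope b s₁ = psi b s₁ / s₁ from rfl, le_div_iff₀ hs₁, mul_comm]
    calc s₁ * chordSlope b t ≤ b 0 / chordSlope b t * chordSlope b t := by
          gcongr; exact min_le_right _ _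
      _ = b 0 := div_mul_cancel₀ _ hc.ne'
      _ ≤ psi b s₁ := coeff_zero_le_psi h.nonneg h.summable hs₁.le (hs₁τ.trans_lt hτR)
  have hcont : ContinuousOn (chordSlope b) (Icc s₁ τ) := fun u hu =>
    (h.hasDerivAt_chordSlope (hs₁.trans_le hu.1) (hu.2.trans_lt hτR)).continuousAt
      |>.continuousWithinAt
  obtain ⟨s, hs, hst⟩ := intermediate_value_Icc' hs₁τ hcont ⟨hlow.le, hhigh⟩
  refine ⟨s, ⟨hs₁.trans_le hs.1, hs.2.lt_of_ne ?_⟩, hst⟩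
  rintro rfl
  exact hlow.ne hst

theorem mul_extq_mem_Ioo_and_chordSlope_eq (h : IsApex b R τ) (ht : t ∈ Ioo τ R) :
    t * extq b t ∈ Ioo 0 τ ∧ chordSlope b (t * extq b t) = chordSlope b t := by
  obtain ⟨s, hs, hst⟩ := h.exists_chordSlope_eq ht
  have ht0 : 0 < t := h.mem_Ioo.1.trans ht.1
  rw [extq_eq_div_of_injOn h.coeff_zero_pos.ne' hs.1 ht0
    (h.chordSlope_strictAntiOn.injOn.mono (Ioc_subset_Ioc_right hs.2.le)) hst,
    mul_div_cancel₀ _ ht0.ne']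
  exact ⟨hs, hst⟩

theorem continuousAt_mul_extq (h : IsApex b R τ) (ht : t ∈ Ioo τ R) :
    ContinuousAt (fun u => u * extq b u) t := by
  have hnhds : ∀ᶠ u in 𝓝 t, u ∈ Ioo τ R := isOpen_Ioo.mem_nhds ht
  have hslope : ContinuousAt (chordSlope b) t :=
    (h.hasDerivAt_chordSlope (h.mem_Ioo.1.trans ht.1) ht.2).continuousAt
  refine (h.chordSlope_strictAntiOn.mono Ioo_subset_Ioc_self).continuousAt_of_comp
    (h.mul_extq_mem_Ioo_and_chordSlope_eq ht).1
    (hnhds.mono fun u hu => (h.mul_extq_mem_Ioo_and_chordSlope_eq hu).1) ?_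
  exact hslope.congr (hnhds.mono fun u hu => (h.mul_extq_mem_Ioo_and_chordSlope_eq hu).2.symm)

theorem hasDerivAt_mul_extq (h : IsApex b R τ) (ht : t ∈ Ioo τ R) :
    HasDerivAt (fun u => u * extq b u)
      ((-tangentIntercept b t / t ^ 2) /
        (-tangentIntercept b (t * extq b t) / (t * extq b t) ^ 2)) t := by
  have hnhds : ∀ᶠ u in 𝓝 t, u ∈ Ioo τ R := isOpen_Ioo.mem_nhds ht
  obtain ⟨hs, -⟩ := h.mul_extq_mem_Ioo_and_chordSlope_eq ht
  refine HasDerivAt.of_comp_left (h.continuousAt_mul_extq ht)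
    (h.hasDerivAt_chordSlope hs.1 (hs.2.trans h.mem_Ioo.2))
    (h.hasDerivAt_chordSlope (h.mem_Ioo.1.trans ht.1) ht.2) ?_
    (hnhds.mono fun u hu => (h.mul_extq_mem_Ioo_and_chordSlope_eq hu).2)
  have := h.tangentIntercept_pos ⟨hs.1.le, hs.2⟩
  exact div_ne_zero (by linarith) (pow_pos hs.1 2).ne'

theorem hasDerivAt_extq_of_lt (h : IsApex b R τ) (ht : t ∈ Ioo 0 τ) :
    HasDerivAt (extq b) (extq b t / t * ((1 - mean b t) / (1 - mean b (t * extq b t)) - 1)) t := by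
  have hψ := h.psi_pos ht.1.le (ht.2.trans h.mem_Ioo.2)
  have hmean : 1 - mean b t ≠ 0 := by
    rw [one_sub_mean hψ.ne']
    exact (div_pos (h.tangentIntercept_pos ⟨ht.1.le, ht.2⟩) hψ).ne'
  rw [h.extq_eq_one ⟨ht.1, ht.2.le⟩, mul_one, div_self hmean, sub_self, mul_zero]
  refine (hasDerivAt_const t 1).congr_of_eventuallyEq ?_
  filter_upwards [isOpen_Ioo.mem_nhds ht] with u hu
  exact h.extq_eq_one ⟨hu.1, hu.2.le⟩

theorem hasDerivAt_extq_of_gt (h : IsApex b R τ) (ht : t ∈ Ioo τ R) :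
    HasDerivAt (extq b) (extq b t / t * ((1 - mean b t) / (1 - mean b (t * extq b t)) - 1)) t := by
  have ht0 : 0 < t := h.mem_Ioo.1.trans ht.1
  obtain ⟨hs, hslope⟩ := h.mul_extq_mem_Ioo_and_chordSlope_eq ht
  have hq : extq b t ≠ 0 := right_ne_zero_of_mul hs.1.ne'
  have hψt := h.psi_pos ht0.le ht.2
  have hψs : psi b (t * extq b t) = extq b t * psi b t :=
    (chordSlope_mul_eq_iff ht0.ne' hq).1 hslope
  have hquot := (h.hasDerivAt_mul_extq ht).div (hasDerivAt_id' t) ht0.ne'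
  refine (hquot.congr_of_eventuallyEq ?_).congr_deriv ?_
  · filter_upwards [isOpen_Ioo.mem_nhds ⟨ht0, ht.2⟩] with u hu
    exact (mul_div_cancel_left₀ _ hu.1.ne').symm
  · rw [one_sub_mean hψt.ne', one_sub_mean (h.psi_pos hs.1.le (hs.2.trans h.mem_Ioo.2)).ne', hψs]
    field_simp

theorem deriv_extq_neg (h : IsApex b R τ) (ht : t ∈ Ioo τ R) : deriv (extq b) t < 0 := by
  have ht0 : 0 < t := h.mem_Ioo.1.trans ht.1
  obtain ⟨hs, -⟩ := h.mul_extq_mem_Ioo_and_chordSlope_eq ht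
  have hψt := h.psi_pos ht0.le ht.2
  have hψs := h.psi_pos hs.1.le (hs.2.trans h.mem_Ioo.2)
  have hratio : (1 - mean b t) / (1 - mean b (t * extq b t)) < 0 := by
    rw [one_sub_mean hψt.ne', one_sub_mean hψs.ne']
    exact div_neg_of_neg_of_pos (div_neg_of_neg_of_pos (h.tangentIntercept_neg ht) hψt)
      (div_pos (h.tangentIntercept_pos ⟨hs.1.le, hs.2⟩) hψs)
  rw [(h.hasDerivAt_extq_of_gt ht).deriv]
  exact mul_neg_of_pos_of_neg (div_pos (pos_of_mul_pos_right hs.1 ht0.le) ht0) (by linarith)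

end IsApex

theorem stmt_18_general
    (b : ℕ → ℝ) (R : ℝ)
    (hnn : ∀ n, 0 ≤ b n) (hb0 : 0 < b 0)
    (hconv : ∀ t : ℝ, 0 ≤ t → t < R → Summable fun n => b n * t ^ n)
    (τ : ℝ) (hτ : τ ∈ Set.Ioo 0 R) (happex : mean b τ = 1) :
    (∀ t ∈ Set.Ioo 0 R, t ≠ τ →
      HasDerivAt (extq b)
        (extq b t / t * ((1 - mean b t) / (1 - mean b (t * extq b t)) - 1)) t) ∧
    (∀ t ∈ Set.Ioo τ R, deriv (extq b) t < 0) := by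
  have h : IsApex b R τ := ⟨hnn, hb0, hconv, hτ, happex⟩
  refine ⟨fun t ht htτ => ?_, fun t ht => h.deriv_extq_neg ht⟩
  rcases htτ.lt_or_gt with hlt | hgt
  · exact h.hasDerivAt_extq_of_lt ⟨ht.1, hlt⟩
  · exact h.hasDerivAt_extq_of_gt ⟨hgt, ht.2⟩

theorem stmt_18
    (b : ℕ → ℝ) (R : ℝ) (hR : 0 < R)
    (hnn : ∀ n, 0 ≤ b n) (hb0 : 0 < b 0)
    (hnc : ∃ n, 1 ≤ n ∧ b n ≠ 0)
    (hconv : ∀ t : ℝ, 0 ≤ t → t < R → Summable fun n => b n * t ^ n)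
    (τ : ℝ) (hτ : τ ∈ Set.Ioo 0 R) (happex : mean b τ = 1) :
    (∀ t ∈ Set.Ioo 0 R, t ≠ τ →
      HasDerivAt (extq b)
        (extq b t / t * ((1 - mean b t) / (1 - mean b (t * extq b t)) - 1)) t) ∧
    (∀ t ∈ Set.Ioo τ R, deriv (extq b) t < 0) :=
  stmt_18_general b R hnn hb0 hconv τ hτ happex
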